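/- arXiv:2603.07707 — 3 statements merged into one kernel-verified Lean document; each statement's English description precedes it below -/
import Mathlib

section
/- Let n ≥ 1 be an integer and let C_n be the 9×9 integer matrix whose first six rows each equal (0, n+1, n+1, n+1, n+1, 1, 2, n+1, n+1) and whose last three rows each equal (2n+3, 1, 1, 1, 1, 2n+1, 2n−1, 1, 1). Then C_n² + 3·C_n = (2n+3)(2n+4)·J₉, where J₉ is the 9×9 all-ones matrix. -/
open Matrix

/-- The 9×9 integer matrix `C_n`: its first six rows each equal
`(0, n+1, n+1, n+1, n+1, 1, 2, n+1, n+1)` and its last three rows each equal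
`(2n+3, 1, 1, 1, 1, 2n+1, 2n−1, 1, 1)`. -/
def Cmat (n : ℤ) : Matrix (Fin 9) (Fin 9) ℤ :=
  Matrix.of fun i j =>
    if (i : ℕ) < 6 then
      ![0, n + 1, n + 1, n + 1, n + 1, 1, 2, n + 1, n + 1] j
    else
      ![2 * n + 3, 1, 1, 1, 1, 2 * n + 1, 2 * n - 1, 1, 1] j

/-- The 9×9 all-ones matrix over ℤ. -/
def J9 : Matrix (Fin 9) (Fin 9) ℤ := Matrix.of fun _ _ => 1

@[simp] lemma cons_val_five' {α : Type*} {m : ℕ} (x : α) (u : Fin (m+5) → α) :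
    Matrix.vecCons x u 5 = Matrix.vecHead (Matrix.vecTail (Matrix.vecTail (Matrix.vecTail (Matrix.vecTail u)))) := rfl

@[simp] lemma cons_val_six' {α : Type*} {m : ℕ} (x : α) (u : Fin (m+6) → α) :
    Matrix.vecCons x u 6 = Matrix.vecHead (Matrix.vecTail (Matrix.vecTail (Matrix.vecTail (Matrix.vecTail (Matrix.vecTail u))))) := rfl

@[simp] lemma cons_val_seven' {α : Type*} {m : ℕ} (x : α) (u : Fin (m+7) → α) :
    Matrix.vecCons x u 7 = Matrix.vecHead (Matrix.vecTail (Matrix.vecTail (Matrix.vecTail (Matrix.vecTail (Matrix.vecTail (Matrix.vecTail u)))))) := rfl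

@[simp] lemma cons_val_eight' {α : Type*} {m : ℕ} (x : α) (u : Fin (m+8) → α) :
    Matrix.vecCons x u 8 = Matrix.vecHead (Matrix.vecTail (Matrix.vecTail (Matrix.vecTail (Matrix.vecTail (Matrix.vecTail (Matrix.vecTail (Matrix.vecTail u))))))) := rfl

theorem Cmat_sq_add_three_smul (n : ℤ) (hn : 1 ≤ n) :
    Cmat n * Cmat n + 3 • Cmat n = ((2 * n + 3) * (2 * n + 4)) • J9 := by
  ext i j
  by_cases hi : (i : ℕ) < 6 <;> fin_cases j <;>
    simp [Cmat, J9, Matrix.mul_apply, Fin.sum_univ_succ, hi] <;> ring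
end

section
/- Let n ≥ 2 be an integer, P(x) = ∑_{i=0}^{n} x^i and Q(x) = ∑_{i=0}^{2n+2} x^i in ℤ[x]. Then (2x^{n+2} + x³ + x)·P(x)² + (x^{2n+5} + x² + x + 3)·P(x) + x^{n+1} + x ≡ (2n+4)·Q(x) (mod x^{2n+3} − 1). -/
open Polynomial

theorem W_one_two (n : ℕ) (hn : 2 ≤ n) :
    ((X : ℤ[X]) ^ (2 * n + 3) - 1) ∣
      (2 * X ^ (n + 2) + X ^ 3 + X)
            * (∑ i ∈ Finset.range (n + 1), (X : ℤ[X]) ^ i) ^ 2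
          + (X ^ (2 * n + 5) + X ^ 2 + X + 3)
            * (∑ i ∈ Finset.range (n + 1), (X : ℤ[X]) ^ i)
          + X ^ (n + 1) + X
        - (2 * (n : ℤ[X]) + 4) * (∑ i ∈ Finset.range (2 * n + 3), (X : ℤ[X]) ^ i) := by
  refine ⟨(∑ i ∈ Finset.range (n + 3), (X : ℤ[X]) ^ i) - X
      + 2 * ∑ j ∈ Finset.range n, ∑ k ∈ Finset.range (j + 1), (X : ℤ[X]) ^ k, ?_⟩
  have hs : ((X : ℤ[X]) - 1) ^ 2 ≠ 0 := pow_ne_zero _ (by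
    simpa using X_sub_C_ne_zero (1 : ℤ))
  apply mul_right_cancel₀ hs
  have hP1 : (∑ i ∈ Finset.range (n + 1), (X : ℤ[X]) ^ i) * (X - 1)
      = X ^ (n + 1) - 1 := geom_sum_mul X (n + 1)
  have hQ1 : (∑ i ∈ Finset.range (2 * n + 3), (X : ℤ[X]) ^ i) * (X - 1)
      = X ^ (2 * n + 3) - 1 := geom_sum_mul X (2 * n + 3)
  have hR1 : (∑ i ∈ Finset.range (n + 3), (X : ℤ[X]) ^ i) * (X - 1)
      = X ^ (n + 3) - 1 := geom_sum_mul X (n + 3)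
  have hD2 : (∑ j ∈ Finset.range n, ∑ k ∈ Finset.range (j + 1), (X : ℤ[X]) ^ k)
      * (X - 1) ^ 2 = X * (X ^ n - 1) - (n : ℤ[X]) * (X - 1) := by
    have h1 : (∑ j ∈ Finset.range n, ∑ k ∈ Finset.range (j + 1), (X : ℤ[X]) ^ k)
        * (X - 1) = ∑ j ∈ Finset.range n, ((X : ℤ[X]) ^ (j + 1) - 1) := by
      rw [Finset.sum_mul]
      exact Finset.sum_congr rfl fun j _ => geom_sum_mul X (j + 1)
    have h2 : (∑ j ∈ Finset.range n, ((X : ℤ[X]) ^ (j + 1) - 1))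
        = X * (∑ j ∈ Finset.range n, (X : ℤ[X]) ^ j) - (n : ℤ[X]) := by
      rw [Finset.sum_sub_distrib, Finset.sum_const, Finset.card_range, Finset.mul_sum]
      simp [pow_succ, mul_comm]
    have h3 : (∑ j ∈ Finset.range n, (X : ℤ[X]) ^ j) * (X - 1) = X ^ n - 1 :=
      geom_sum_mul X n
    calc (∑ j ∈ Finset.range n, ∑ k ∈ Finset.range (j + 1), (X : ℤ[X]) ^ k) * (X - 1) ^ 2
        = ((∑ j ∈ Finset.range n, ∑ k ∈ Finset.range (j + 1), (X : ℤ[X]) ^ k)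
            * (X - 1)) * (X - 1) := by ring
      _ = (X * (∑ j ∈ Finset.range n, (X : ℤ[X]) ^ j) - (n : ℤ[X])) * (X - 1) := by
          rw [h1, h2]
      _ = X * ((∑ j ∈ Finset.range n, (X : ℤ[X]) ^ j) * (X - 1))
            - (n : ℤ[X]) * (X - 1) := by ring
      _ = X * (X ^ n - 1) - (n : ℤ[X]) * (X - 1) := by rw [h3]
  linear_combination
    ((2 * X ^ (n + 2) + X ^ 3 + X)
        * ((∑ i ∈ Finset.range (n + 1), (X : ℤ[X]) ^ i) * (X - 1) + X ^ (n + 1) - 1)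
      + (X ^ (2 * n + 5) + X ^ 2 + X + 3) * (X - 1)) * hP1
    - (2 * (n : ℤ[X]) + 4) * (X - 1) * hQ1
    - (X ^ (2 * n + 3) - 1) * (X - 1) * hR1
    - 2 * (X ^ (2 * n + 3) - 1) * hD2
end

section
/- Let n ≥ 2 be an integer and P(x) = ∑_{i=0}^{n} x^i in ℤ[x]. Set W(x) = (2x^{n+2} + x³ + x)·P(x)² + (x^{2n+5} + x² + x + 3)·P(x) + x^{n+1} + x. Then (1 − x)·W(x) ≡ 0 (mod x^{2n+3} − 1), i.e. x^{2n+3} − 1 divides (1 − x)·W(x) in ℤ[x]. -/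
open Polynomial

theorem one_sub_X_mul_W (n : ℕ) (hn : 2 ≤ n) :
    ((X : ℤ[X]) ^ (2 * n + 3) - 1) ∣
      (1 - X) *
        ((2 * X ^ (n + 2) + X ^ 3 + X)
              * (∑ i ∈ Finset.range (n + 1), (X : ℤ[X]) ^ i) ^ 2
            + (X ^ (2 * n + 5) + X ^ 2 + X + 3)
              * (∑ i ∈ Finset.range (n + 1), (X : ℤ[X]) ^ i)
            + X ^ (n + 1) + X) := by
  set P : ℤ[X] := ∑ i ∈ Finset.range (n + 1), (X : ℤ[X]) ^ i with hP
  have h : (1 - X) * P = 1 - X ^ (n + 1) := by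
    have := geom_sum_mul (X : ℤ[X]) (n + 1)
    rw [hP]; linear_combination -this
  refine ⟨-(1 + X - X ^ 2 + 2 * P + X ^ (n + 3)), ?_⟩
  have hx : (1 - X : ℤ[X]) ≠ 0 := by
    intro hc
    have h1 : (X : ℤ[X]) = 1 := by linear_combination -hc
    have := congrArg (fun p => Polynomial.coeff p 1) h1
    simp [Polynomial.coeff_one] at this
  apply mul_left_cancel₀ hx
  linear_combination ((1 - X) * (2 * X ^ (n + 2) + X ^ 3 + X) * P
      + (1 - X) * (X ^ (2 * n + 5) + X ^ 2 + X + 3)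
      + 2 * (X ^ (2 * n + 3) - 1)
      + (1 - X ^ (n + 1)) * (2 * X ^ (n + 2) + X ^ 3 + X)) * h
end
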